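/- Let $A$ be the $(n+1)\times(n+1)$ matrix with entries $A_{i,j} = Z_{(a_i,0)\to(0,j)}$ where $0 = a_0 < a_1 < \cdots < a_n$ are integers and $Z$ is the weighted Schröder path partition function. Then $\det(A) = q^{n(n+1)(2n+1)/6} \prod_{s=0}^{n-1}(\gamma + q^{2s+1})^{n-s} \cdot \frac{\Delta(q^{2a_0}, q^{2a_1}, \ldots, q^{2a_n})}{\Delta(q^0, q^2, \ldots, q^{2n})}$, where $\Delta(x_0,\ldots,x_n) = \prod_{i>j}(x_i - x_j)$ is the Vandermonde determinant. -/

import Mathlib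

/-- A step of a Schröder path: up `(0,1)`, left `(-1,0)`, or diagonal `(-1,1)`. -/
inductive SStep
  | up
  | left
  | diag
deriving DecidableEq

instance : Fintype SStep :=
  ⟨{SStep.up, SStep.left, SStep.diag}, by intro s; cases s <;> decide⟩

/-- The result of taking a step from a given position. -/
def stepMove : ℤ × ℤ → SStep → ℤ × ℤ
  | (x, y), SStep.up => (x, y + 1)
  | (x, y), SStep.left => (x - 1, y)
  | (x, y), SStep.diag => (x - 1, y + 1)

/-- Endpoint of a walk starting at `p` and taking the steps in the list. -/
def endPos : ℤ × ℤ → List SStep → ℤ × ℤ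
  | p, [] => p
  | p, s :: rest => endPos (stepMove p s) rest

/-- The area to the left of the path, `∑ (x_s + x_{s+1}) (y_{s+1} - y_s)`:
an up step from `(x,y)` contributes `2x`, a diagonal step `2x - 1`, a left step `0`. -/
def areaOf : ℤ × ℤ → List SStep → ℤ
  | _, [] => 0
  | (x, y), SStep.up :: rest => 2 * x + areaOf (x, y + 1) rest
  | (x, y), SStep.left :: rest => areaOf (x - 1, y) rest
  | (x, y), SStep.diag :: rest => (2 * x - 1) + areaOf (x - 1, y + 1) rest

/-- All lists of steps of length `n`. -/
def allLists : ℕ → Finset (List SStep)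
  | 0 => {[]}
  | n + 1 => Finset.univ.biUnion fun s : SStep => (allLists n).image fun l => s :: l

/-- The (finite) set of Schröder paths from `(i,0)` to `(0,j)`, encoded as their
lists of steps read from the starting point `(i,0)`. -/
def pathFinset (i j : ℕ) : Finset (List SStep) :=
  ((Finset.range (i + j + 1)).biUnion allLists).filter
    fun p => endPos ((i : ℤ), 0) p = (0, (j : ℤ))

/-- Number of diagonal steps of a path. -/
def diagCount (p : List SStep) : ℕ := p.count SStep.diag

/-- The partition function `Z_{(i,0)→(0,j)} = ∑_p γ^{k(p)} q^{A(p)}` of weighted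
Schröder paths from `(i,0)` to `(0,j)`. -/
def Zpf {R : Type*} [CommRing R] (γ q : R) (i j : ℕ) : R :=
  ∑ p ∈ pathFinset i j, γ ^ diagCount p * q ^ (areaOf ((i : ℤ), 0) p).toNat

/-!
Splitting a Schröder path at its first step gives
`Z(i+1, j+1) = q^{2i+2} Z(i+1, j) + Z(i, j+1) + γ q^{2i+1} Z(i, j)`, with `Z = 1` on both axes.
Hence `Z(i, j) = P_j(q^{2i})` for a polynomial `P_j` of degree `j` whose leading coefficient is
`∏_{k<j} q (γ + q^{2k+1}) / (q^{2k+2} - 1)`. The matrix therefore factors as the Vandermonde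
matrix of the `q^{2a_i}` times an upper triangular matrix. Finally, the `m`-th leading
coefficient times `∏_{j<m} (q^{2m} - q^{2j})` is `q^{m²} ∏_{s<m} (γ + q^{2s+1})`, which turns the
product of the leading coefficients times `Δ(1, q², …, q^{2n})` into the stated prefactor.
-/

open Finset

lemma Matrix.det_of_sum_mul_pow {R : Type*} [CommRing R] {n : ℕ} (c : ℕ → ℕ → R)
    (hc : ∀ {j k : ℕ}, j < k → c k j = 0) (v : Fin n → R) :
    (Matrix.of fun i j : Fin n => ∑ k ∈ range (j + 1), c k j * v i ^ k).det =
      (Matrix.vandermonde v).det * ∏ j : Fin n, c j j := by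
  have hfactor : (Matrix.of fun i j : Fin n => ∑ k ∈ range (j + 1), c k j * v i ^ k) =
      Matrix.vandermonde v * Matrix.of fun k j : Fin n => c k j := by
    ext i j
    simp only [Matrix.of_apply, Matrix.mul_apply, Matrix.vandermonde_apply]
    rw [Fin.sum_univ_eq_sum_range (fun k => v i ^ k * c k j),
      ← sum_subset (range_subset_range.mpr j.isLt) fun k _ hk => by
        rw [hc (by simpa using hk), mul_zero]]
    simp only [mul_comm]
  have htriangular : (Matrix.of fun k j : Fin n => c k j).IsUpperTriangular := fun _ _ h => hc h
  rw [hfactor, Matrix.det_mul, Matrix.det_of_isUpperTriangular htriangular]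
  rfl

lemma Matrix.det_vandermonde_eq_prod_filter_lt {R : Type*} [CommRing R] {n : ℕ} (v : Fin n → R) :
    (Matrix.vandermonde v).det = ∏ i : Fin n, ∏ j ∈ univ.filter fun j => j < i, (v i - v j) := by
  rw [Matrix.det_vandermonde]
  exact prod_comm' fun i j => by simp

lemma prod_fin_filter_lt_eq_prod_range {M : Type*} [CommMonoid M] (m : ℕ) (f : ℕ → ℕ → M) :
    ∏ i : Fin m, ∏ j ∈ univ.filter (fun j => j < i), f i j =
      ∏ i ∈ range m, ∏ j ∈ range i, f i j := by
  rw [← Fin.prod_univ_eq_prod_range (fun i => ∏ j ∈ range i, f i j)]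
  refine prod_congr rfl fun i _ => ?_
  rw [filter_gt_eq_Iio, ← Nat.Iio_eq_range, ← Fin.map_valEmbedding_Iio, prod_map]
  rfl

lemma prod_range_succ_prod_range {M : Type*} [CommMonoid M] (g : ℕ → M) (n : ℕ) :
    ∏ i ∈ range (n + 1), ∏ s ∈ range i, g s = ∏ s ∈ range n, g s ^ (n - s) := by
  rw [prod_comm' (t' := range n) (s' := fun s => Ioc s n) fun i s => by simp; omega]
  simp

lemma sum_range_succ_sq (n : ℕ) :
    ∑ i ∈ range (n + 1), i ^ 2 = n * (n + 1) * (2 * n + 1) / 6 := by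
  have hsix (m : ℕ) : 6 * ∑ i ∈ range (m + 1), i ^ 2 = m * (m + 1) * (2 * m + 1) := by
    induction m with
    | zero => rfl
    | succ m ih => rw [sum_range_succ, mul_add, ih]; ring
  have := hsix n
  omega

lemma length_eq_count_add_count_add_count (p : List SStep) :
    p.length = p.count .up + p.count .left + p.count .diag := by
  induction p with
  | nil => rfl
  | cons s p ih => cases s <;> simp [ih] <;> omega

lemma endPos_eq (p : List SStep) : ∀ x y : ℤ, endPos (x, y) p =
    (x - (p.count .left + p.count .diag : ℕ), y + (p.count .up + p.count .diag : ℕ)) := by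
  induction p with
  | nil => simp [endPos]
  | cons s p ih =>
    intro x y
    cases s <;> simp only [endPos, stepMove, ih, List.count_cons] <;> simp <;> omega

lemma mem_allLists {p : List SStep} {n : ℕ} : p ∈ allLists n ↔ p.length = n := by
  induction n generalizing p with
  | zero => simp [allLists]
  | succ n ih =>
    cases p with
    | nil => simp [allLists]
    | cons s p => simp [allLists, ih]

lemma mem_pathFinset {p : List SStep} {i j : ℕ} :
    p ∈ pathFinset i j ↔ p.count .left + p.count .diag = i ∧ p.count .up + p.count .diag = j := by
  have hlen := length_eq_count_add_count_add_count p
  simp only [pathFinset, mem_filter, mem_biUnion, mem_range, endPos_eq, Prod.mk.injEq]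
  constructor
  · rintro ⟨-, h₁, h₂⟩
    omega
  · rintro ⟨rfl, rfl⟩
    exact ⟨⟨p.length, by omega, mem_allLists.mpr rfl⟩, by omega, by simp⟩

lemma areaOf_indep_snd (p : List SStep) : ∀ x y y' : ℤ, areaOf (x, y) p = areaOf (x, y') p := by
  induction p with
  | nil => intros; rfl
  | cons s p ih =>
    intro x y y'
    cases s <;> simp only [areaOf, ih _ y y', ih _ (y + 1) (y' + 1)]

lemma areaOf_nonneg (p : List SStep) :
    ∀ x y : ℤ, ((p.count .left + p.count .diag : ℕ) : ℤ) ≤ x → 0 ≤ areaOf (x, y) p := by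
  induction p with
  | nil => intros; simp [areaOf]
  | cons s p ih =>
    intro x y h
    cases s <;> simp only [areaOf, List.count_cons] at h ⊢ <;> simp at h
    · have := ih x (y + 1) (by omega); omega
    · exact ih _ _ (by omega)
    · have := ih (x - 1) (y + 1) (by omega); omega

lemma pathFinset_zero_right (i : ℕ) : pathFinset i 0 = {List.replicate i .left} := by
  ext p
  have hlen := length_eq_count_add_count_add_count p
  rw [mem_pathFinset, mem_singleton]
  constructor
  · rintro ⟨h₁, h₂⟩
    exact List.eq_replicate_iff.mpr
      ⟨by omega, fun b hb => (List.count_eq_length.mp (by omega) b hb).symm⟩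
  · rintro rfl
    simp [List.count_replicate]

lemma pathFinset_zero_left (j : ℕ) : pathFinset 0 j = {List.replicate j .up} := by
  ext p
  have hlen := length_eq_count_add_count_add_count p
  rw [mem_pathFinset, mem_singleton]
  constructor
  · rintro ⟨h₁, h₂⟩
    exact List.eq_replicate_iff.mpr
      ⟨by omega, fun b hb => (List.count_eq_length.mp (by omega) b hb).symm⟩
  · rintro rfl
    simp [List.count_replicate]

lemma areaOf_replicate_left (i : ℕ) : ∀ x y : ℤ, areaOf (x, y) (List.replicate i .left) = 0 := by
  induction i with
  | zero => intros; rfl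
  | succ i ih => intros; simp only [List.replicate_succ, areaOf, ih]

lemma areaOf_replicate_up (j : ℕ) : ∀ y : ℤ, areaOf (0, y) (List.replicate j .up) = 0 := by
  induction j with
  | zero => intros; rfl
  | succ j ih => intros; simp only [List.replicate_succ, areaOf, ih]; ring

lemma pathFinset_succ_succ (i j : ℕ) :
    pathFinset (i + 1) (j + 1) =
      (pathFinset (i + 1) j).image (List.cons .up) ∪
      (pathFinset i (j + 1)).image (List.cons .left) ∪
      (pathFinset i j).image (List.cons .diag) := by
  ext p
  cases p with
  | nil => simp [mem_pathFinset]
  | cons s p => cases s <;> simp [mem_pathFinset] <;> omega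

lemma disjoint_image_cons {s t : SStep} (h : s ≠ t) (A B : Finset (List SStep)) :
    Disjoint (A.image (List.cons s)) (B.image (List.cons t)) := by
  simp [Finset.disjoint_left, h.symm]

section Weights

variable {R : Type*} [CommRing R] (γ q : R)

def pathWeight (i : ℕ) (p : List SStep) : R :=
  γ ^ diagCount p * q ^ (areaOf ((i : ℤ), 0) p).toNat

lemma Zpf_eq_sum_pathWeight (i j : ℕ) :
    Zpf γ q i j = ∑ p ∈ pathFinset i j, pathWeight γ q i p := rfl

lemma Zpf_zero_right (i : ℕ) : Zpf γ q i 0 = 1 := by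
  simp [Zpf, pathFinset_zero_right, diagCount, List.count_replicate, areaOf_replicate_left]

lemma Zpf_zero_left (j : ℕ) : Zpf γ q 0 j = 1 := by
  simp [Zpf, pathFinset_zero_left, diagCount, List.count_replicate, areaOf_replicate_up]

variable {γ q} {i j : ℕ} {p : List SStep}

lemma pathWeight_up_cons (hp : p ∈ pathFinset i j) :
    pathWeight γ q i (.up :: p) = q ^ (2 * i) * pathWeight γ q i p := by
  have hnonneg := areaOf_nonneg p i 0 (by rw [(mem_pathFinset.mp hp).1])
  have htoNat : (2 * (i : ℤ) + areaOf ((i : ℤ), 0) p).toNat =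
      2 * i + (areaOf ((i : ℤ), 0) p).toNat := by
    omega
  rw [pathWeight, pathWeight, areaOf, areaOf_indep_snd p i (0 + 1) 0, htoNat, pow_add]
  simp [diagCount]
  ring

lemma pathWeight_left_cons : pathWeight γ q (i + 1) (.left :: p) = pathWeight γ q i p := by
  simp [pathWeight, diagCount, areaOf]

lemma pathWeight_diag_cons (hp : p ∈ pathFinset i j) :
    pathWeight γ q (i + 1) (.diag :: p) = γ * q ^ (2 * i + 1) * pathWeight γ q i p := by
  have hnonneg := areaOf_nonneg p i 0 (by rw [(mem_pathFinset.mp hp).1])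
  have htoNat : (2 * ((i : ℤ) + 1) - 1 + areaOf ((i : ℤ), 0) p).toNat =
      2 * i + 1 + (areaOf ((i : ℤ), 0) p).toNat := by
    omega
  rw [pathWeight, pathWeight, areaOf, areaOf_indep_snd p _ (0 + 1) 0, Nat.cast_add_one,
    add_sub_cancel_right, htoNat, pow_add]
  simp [diagCount]
  ring

lemma Zpf_succ_succ (i j : ℕ) :
    Zpf γ q (i + 1) (j + 1) = q ^ (2 * (i + 1)) * Zpf γ q (i + 1) j + Zpf γ q i (j + 1)
      + γ * q ^ (2 * i + 1) * Zpf γ q i j := by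
  simp only [Zpf_eq_sum_pathWeight, pathFinset_succ_succ, mul_sum]
  rw [sum_union (disjoint_union_left.mpr ⟨disjoint_image_cons (by simp) _ _,
      disjoint_image_cons (by simp) _ _⟩),
    sum_union (disjoint_image_cons (by simp) _ _),
    sum_image List.cons_injective.injOn, sum_image List.cons_injective.injOn,
    sum_image List.cons_injective.injOn]
  congr 1
  congr 1
  · exact sum_congr rfl fun p hp => pathWeight_up_cons hp
  · exact sum_congr rfl fun p _ => pathWeight_left_cons
  · exact sum_congr rfl fun p hp => pathWeight_diag_cons hp

end Weights

section Coefficients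

variable {K : Type*} [Field K] (γ q : K)

def zpfRatio (k : ℕ) : K := q * (γ + q ^ (2 * k + 1)) / (q ^ (2 * k + 2) - 1)

/-- `zpfCoeff γ q k j` is the coefficient of `x^k` in `P_j`. Comparing coefficients in
`P_{j+1}(q²x) - P_{j+1}(x) = q²x P_j(q²x) + γqx P_j(x)` determines all of them but the constant
one, which is fixed by `P_{j+1}(1) = Z(0, j+1) = 1`. -/
def zpfCoeff : ℕ → ℕ → K
  | 0, 0 => 1
  | _ + 1, 0 => 0
  | 0, j + 1 => 1 - ∑ k ∈ range (j + 1), zpfCoeff k j * zpfRatio γ q k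
  | k + 1, j + 1 => zpfCoeff k j * zpfRatio γ q k

lemma zpfCoeff_succ_succ (k j : ℕ) :
    zpfCoeff γ q (k + 1) (j + 1) = zpfCoeff γ q k j * zpfRatio γ q k := by
  rw [zpfCoeff]

lemma zpfCoeff_eq_zero_of_lt {j k : ℕ} (h : j < k) : zpfCoeff γ q k j = 0 := by
  induction j generalizing k with
  | zero => obtain ⟨k, rfl⟩ := Nat.exists_eq_add_one_of_ne_zero h.ne'; rw [zpfCoeff]
  | succ j ih =>
    obtain ⟨k, rfl⟩ := Nat.exists_eq_add_one_of_ne_zero (Nat.ne_zero_of_lt h)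
    rw [zpfCoeff_succ_succ, ih (by omega), zero_mul]

lemma sum_zpfCoeff (j : ℕ) : ∑ k ∈ range (j + 1), zpfCoeff γ q k j = 1 := by
  cases j with
  | zero => simp [zpfCoeff]
  | succ j => simp [sum_range_succ' _ (j + 1), zpfCoeff]

variable {γ q}

lemma zpfCoeff_succ_succ_mul_sub (hq : ∀ k : ℕ, q ^ (2 * k + 2) ≠ 1) (k j : ℕ) (x : K) :
    zpfCoeff γ q (k + 1) (j + 1) * ((q ^ 2 * x) ^ (k + 1) - x ^ (k + 1)) =
      q ^ 2 * x * (zpfCoeff γ q k j * (q ^ 2 * x) ^ k) +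
        γ * q * x * (zpfCoeff γ q k j * x ^ k) := by
  have := sub_ne_zero.mpr (hq k)
  rw [zpfCoeff_succ_succ, zpfRatio]
  field_simp
  ring

lemma sum_zpfCoeff_mul_pow_sub (hq : ∀ k : ℕ, q ^ (2 * k + 2) ≠ 1) (j : ℕ) (x : K) :
    ∑ k ∈ range (j + 1 + 1), zpfCoeff γ q k (j + 1) * (q ^ 2 * x) ^ k -
        ∑ k ∈ range (j + 1 + 1), zpfCoeff γ q k (j + 1) * x ^ k =
      q ^ 2 * x * ∑ k ∈ range (j + 1), zpfCoeff γ q k j * (q ^ 2 * x) ^ k +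
        γ * q * x * ∑ k ∈ range (j + 1), zpfCoeff γ q k j * x ^ k := by
  rw [sum_range_succ' _ (j + 1), sum_range_succ' _ (j + 1), pow_zero, pow_zero,
    add_sub_add_right_eq_sub, ← sum_sub_distrib]
  simp only [← mul_sub, zpfCoeff_succ_succ_mul_sub hq, sum_add_distrib, mul_sum]

lemma Zpf_eq_sum_zpfCoeff (hq : ∀ k : ℕ, q ^ (2 * k + 2) ≠ 1) (i j : ℕ) :
    Zpf γ q i j = ∑ k ∈ range (j + 1), zpfCoeff γ q k j * (q ^ (2 * i)) ^ k := by
  induction j generalizing i with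
  | zero => simp [Zpf_zero_right, zpfCoeff]
  | succ j ihj =>
    induction i with
    | zero => simp [Zpf_zero_left, sum_zpfCoeff]
    | succ i ihi =>
      rw [Zpf_succ_succ, ihi, ihj, ihj, show q ^ (2 * (i + 1)) = q ^ 2 * q ^ (2 * i) by ring,
        show q ^ (2 * i + 1) = q * q ^ (2 * i) by ring]
      linear_combination -sum_zpfCoeff_mul_pow_sub hq j (q ^ (2 * i))

end Coefficients

section Constant

variable {K : Type*} [Field K] {γ q : K}

lemma zpfCoeff_self_mul_prod_sub (hq : ∀ k : ℕ, q ^ (2 * k + 2) ≠ 1) (m : ℕ) :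
    zpfCoeff γ q m m * ∏ j ∈ range m, (q ^ (2 * m) - q ^ (2 * j)) =
      q ^ (m ^ 2) * ∏ s ∈ range m, (γ + q ^ (2 * s + 1)) := by
  induction m with
  | zero => simp [zpfCoeff]
  | succ m ih =>
    have hshift : ∏ j ∈ range m, (q ^ (2 * (m + 1)) - q ^ (2 * (j + 1))) =
        q ^ (2 * m) * ∏ j ∈ range m, (q ^ (2 * m) - q ^ (2 * j)) :=
      calc _ = ∏ j ∈ range m, q ^ 2 * (q ^ (2 * m) - q ^ (2 * j)) :=
            prod_congr rfl fun j _ => by ring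
        _ = _ := by rw [prod_mul_distrib, prod_const, card_range, ← pow_mul]
    have hratio : zpfRatio γ q m * (q ^ (2 * m + 2) - 1) = q * (γ + q ^ (2 * m + 1)) :=
      div_mul_cancel₀ _ (sub_ne_zero.mpr (hq m))
    calc zpfCoeff γ q (m + 1) (m + 1) * ∏ j ∈ range (m + 1), (q ^ (2 * (m + 1)) - q ^ (2 * j))
        = (zpfCoeff γ q m m * ∏ j ∈ range m, (q ^ (2 * m) - q ^ (2 * j))) *
            (zpfRatio γ q m * (q ^ (2 * m + 2) - 1)) * q ^ (2 * m) := by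
          rw [zpfCoeff_succ_succ, prod_range_succ', hshift]; ring
      _ = q ^ ((m + 1) ^ 2) * ∏ s ∈ range (m + 1), (γ + q ^ (2 * s + 1)) := by
          rw [ih, hratio, prod_range_succ]; ring

lemma prod_zpfCoeff_self_mul_prod_prod_sub (hq : ∀ k : ℕ, q ^ (2 * k + 2) ≠ 1) (n : ℕ) :
    (∏ j ∈ range (n + 1), zpfCoeff γ q j j) *
        ∏ i ∈ range (n + 1), ∏ j ∈ range i, (q ^ (2 * i) - q ^ (2 * j)) =
      q ^ (n * (n + 1) * (2 * n + 1) / 6) * ∏ s ∈ range n, (γ + q ^ (2 * s + 1)) ^ (n - s) := by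
  rw [← prod_mul_distrib, prod_congr rfl fun m _ => zpfCoeff_self_mul_prod_sub hq m,
    prod_mul_distrib, prod_pow_eq_pow_sum, sum_range_succ_sq, prod_range_succ_prod_range]

end Constant

theorem aztec_rectangle_partition_function_general (γ q : ℝ) (hq0 : 0 < q) (hq1 : q ≠ 1)
    (n : ℕ) (a : Fin (n + 1) → ℕ) :
    Matrix.det (Matrix.of fun i j : Fin (n + 1) => Zpf γ q (a i) (j : ℕ)) =
      q ^ (n * (n + 1) * (2 * n + 1) / 6) *
        (∏ s ∈ Finset.range n, (γ + q ^ (2 * s + 1)) ^ (n - s)) *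
        ((∏ i : Fin (n + 1), ∏ j ∈ Finset.univ.filter fun j => j < i,
            (q ^ (2 * a i) - q ^ (2 * a j))) /
          (∏ i : Fin (n + 1), ∏ j ∈ Finset.univ.filter fun j => j < i,
            (q ^ (2 * (i : ℕ)) - q ^ (2 * (j : ℕ))))) := by
  have hq : ∀ k : ℕ, q ^ (2 * k + 2) ≠ 1 := fun k => by
    rw [ne_eq, pow_eq_one_iff_of_nonneg hq0.le (by omega)]
    exact hq1
  have hdenom : ∏ i ∈ range (n + 1), ∏ j ∈ range i, (q ^ (2 * i) - q ^ (2 * j)) ≠ 0 :=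
    prod_ne_zero_iff.mpr fun i _ => prod_ne_zero_iff.mpr fun j hj =>
      sub_ne_zero.mpr fun h => by have := (pow_right_inj₀ hq0 hq1).mp h; simp at hj; omega
  simp only [Zpf_eq_sum_zpfCoeff hq]
  rw [Matrix.det_of_sum_mul_pow _ (zpfCoeff_eq_zero_of_lt γ q),
    Matrix.det_vandermonde_eq_prod_filter_lt,
    prod_fin_filter_lt_eq_prod_range _ fun i j => q ^ (2 * i) - q ^ (2 * j),
    Fin.prod_univ_eq_prod_range (fun j => zpfCoeff γ q j j),
    ← prod_zpfCoeff_self_mul_prod_prod_sub hq n]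
  field_simp

/-- The partition function of the domino tiling of the Aztec rectangle with defects:
for integers `0 = a_0 < a_1 < ⋯ < a_n`, the determinant of the matrix
`A_{i,j} = Z_{(a_i,0)→(0,j)}` equals
`q^{n(n+1)(2n+1)/6} ∏_{s=0}^{n-1}(γ+q^{2s+1})^{n-s} · Δ(q^{2a_0},…,q^{2a_n})/Δ(q^0,…,q^{2n})`. -/
theorem aztec_rectangle_partition_function (γ q : ℝ) (hq0 : 0 < q) (hq1 : q ≠ 1)
    (n : ℕ) (a : Fin (n + 1) → ℕ) (ha0 : a 0 = 0) (hmono : StrictMono a) :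
    Matrix.det (Matrix.of fun i j : Fin (n + 1) => Zpf γ q (a i) (j : ℕ)) =
      q ^ (n * (n + 1) * (2 * n + 1) / 6) *
        (∏ s ∈ Finset.range n, (γ + q ^ (2 * s + 1)) ^ (n - s)) *
        ((∏ i : Fin (n + 1), ∏ j ∈ Finset.univ.filter fun j => j < i,
            (q ^ (2 * a i) - q ^ (2 * a j))) /
          (∏ i : Fin (n + 1), ∏ j ∈ Finset.univ.filter fun j => j < i,
            (q ^ (2 * (i : ℕ)) - q ^ (2 * (j : ℕ))))) :=
  aztec_rectangle_partition_function_general γ q hq0 hq1 n a
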